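/- arXiv:2602.08158 — 5 statements merged into one kernel-verified Lean document; each statement's English description precedes it below -/
import Mathlib

section
/- For a duplicial module M, the alternating sum of degeneracies d_n = Σ_{i=0}^{n+1} (-1)^i s_{n,i} : M_n → M_{n+1} satisfies d_{n+1} ∘ d_n = 0. -/
open CategoryTheory

universe v u

/-- A duplicial module in a pre-additive category `C`: objects `M n` together with
face maps `δ n i : M (n+1) ⟶ M n` (representing `∂_{n+1,i}`, meaningful for `0 ≤ i ≤ n+1`)
and degeneracy maps `σ n i : M n ⟶ M (n+1)` (representing `s_{n,i}`, meaningful for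
`0 ≤ i ≤ n+1`, so including the extra degeneracy `s_{n,n+1}`), satisfying the standard
simplicial identities extended to include the extra degeneracy; the composite
`∂_{n+1,0} s_{n,n+1}` is the duplicial operator `t_n`.
Here `f ≫ g` denotes "first apply `f`, then `g`". -/
structure DupMod (C : Type u) [Category.{v} C] [Preadditive C] where
  M : ℕ → C
  δ : ∀ n : ℕ, ℕ → (M (n + 1) ⟶ M n)
  σ : ∀ n : ℕ, ℕ → (M n ⟶ M (n + 1))
  /-- `∂_{n+1,k} ∂_{n+2,j} = ∂_{n+1,j} ∂_{n+2,k+1}` for `j ≤ k ≤ n+1`. -/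
  δδ : ∀ n j k, j ≤ k → k ≤ n + 1 →
    δ (n + 1) j ≫ δ n k = δ (n + 1) (k + 1) ≫ δ n j
  /-- `∂_{n+2,j} s_{n+1,k+1} = s_{n,k} ∂_{n+1,j}` for `1 ≤ (k+1)-j ≤ n+1`,
  i.e. `j ≤ k ≤ n+j`, with `k ≤ n+1`. -/
  δσ_lt : ∀ n j k, j ≤ k → k ≤ n + j → k ≤ n + 1 →
    σ (n + 1) (k + 1) ≫ δ (n + 1) j = δ n j ≫ σ n k
  /-- `∂_{n+1,j} s_{n,j} = 1` for `j ≤ n+1`. -/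
  δσ_self : ∀ n j, j ≤ n + 1 → σ n j ≫ δ n j = 𝟙 (M n)
  /-- `∂_{n+1,j+1} s_{n,j} = 1` for `j ≤ n`. -/
  δσ_succ : ∀ n j, j ≤ n → σ n j ≫ δ n (j + 1) = 𝟙 (M n)
  /-- `∂_{n+2,j+1} s_{n+1,k} = s_{n,k} ∂_{n+1,j}` for `k < j ≤ n+1`. -/
  δσ_gt : ∀ n j k, k < j → j ≤ n + 1 →
    σ (n + 1) k ≫ δ (n + 1) (j + 1) = δ n j ≫ σ n k
  /-- `s_{n+1,j} s_{n,k} = s_{n+1,k+1} s_{n,j}` for `j ≤ k ≤ n+1`. -/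
  σσ : ∀ n j k, j ≤ k → k ≤ n + 1 →
    σ n k ≫ σ (n + 1) j = σ n j ≫ σ (n + 1) (k + 1)

/-- Iterated composition: `cpow f m = f ≫ f ≫ ⋯ ≫ f` (`m` factors), i.e. `f^m`. -/
def cpow {C : Type u} [Category.{v} C] {A : C} (f : A ⟶ A) : ℕ → (A ⟶ A)
  | 0 => 𝟙 A
  | m + 1 => f ≫ cpow f m

namespace DupMod

variable {C : Type u} [Category.{v} C] [Preadditive C] (X : DupMod C)

/-- The simplicial differential `b_{n+1} = ∑_{i=0}^{n+1} (-1)^i ∂_{n+1,i} : M_{n+1} → M_n`. -/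
def b (n : ℕ) : X.M (n + 1) ⟶ X.M n :=
  ∑ i ∈ Finset.range (n + 2), ((-1 : ℤ) ^ i) • X.δ n i

/-- The Dwyer–Kan differential `d_n = ∑_{i=0}^{n+1} (-1)^i s_{n,i} : M_n → M_{n+1}`. -/
def d (n : ℕ) : X.M n ⟶ X.M (n + 1) :=
  ∑ i ∈ Finset.range (n + 2), ((-1 : ℤ) ^ i) • X.σ n i

/-- The duplicial operator `t_n = ∂_{n+1,0} s_{n,n+1} : M_n → M_n`. -/
def t (n : ℕ) : X.M n ⟶ X.M n := X.σ n (n + 1) ≫ X.δ n 0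

/-- The Karoubi operator `κ_n = (-1)^n (∂_{n+1,0} s_{n,n+1} - s_{n-1,n} ∂_{n,0}) : M_n → M_n`
(for `n = 0` the second term is absent). -/
def κ : ∀ n : ℕ, X.M n ⟶ X.M n
  | 0 => X.σ 0 1 ≫ X.δ 0 0
  | n + 1 => ((-1 : ℤ) ^ (n + 1)) •
      (X.σ (n + 1) (n + 2) ≫ X.δ (n + 1) 0 - X.δ n 0 ≫ X.σ n (n + 1))

end DupMod

/-- For a duplicial module `M`, the alternating sum of degeneracies
`d_n = ∑_{i=0}^{n+1} (-1)^i s_{n,i} : M_n → M_{n+1}` satisfies `d_{n+1} ∘ d_n = 0`. -/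
theorem duplicial_d_squared_zero {C : Type u} [Category.{v} C] [Preadditive C]
    (X : DupMod C) (n : ℕ) :
    X.d n ≫ X.d (n + 1) = 0 := by
  dsimp only [DupMod.d]
  rw [Preadditive.sum_comp]
  simp only [Preadditive.comp_sum, Preadditive.zsmul_comp, Preadditive.comp_zsmul, smul_smul]
  rw [← Finset.sum_product']
  set s := Finset.range (n + 2) ×ˢ Finset.range (n + 3) with hs
  rw [← Finset.sum_filter_add_sum_filter_not s (fun p => p.2 ≤ p.1)]
  have key : ∑ p ∈ s.filter (fun p => ¬ p.2 ≤ p.1),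
      ((-1 : ℤ) ^ p.2 * (-1 : ℤ) ^ p.1) • (X.σ n p.1 ≫ X.σ (n + 1) p.2)
      = ∑ p ∈ s.filter (fun p => p.2 ≤ p.1),
      -(((-1 : ℤ) ^ p.2 * (-1 : ℤ) ^ p.1) • (X.σ n p.1 ≫ X.σ (n + 1) p.2)) := by
    apply Finset.sum_bij' (fun p _ => (p.2 - 1, p.1)) (fun p _ => (p.2, p.1 + 1))
    case hi =>
      intro p hp
      simp only [hs, Finset.mem_filter, Finset.mem_product, Finset.mem_range] at hp ⊢
      omega
    case hj =>
      intro p hp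
      simp only [hs, Finset.mem_filter, Finset.mem_product, Finset.mem_range] at hp ⊢
      omega
    case left_neg =>
      intro p hp
      simp only [hs, Finset.mem_filter, Finset.mem_product, Finset.mem_range] at hp
      ext <;> simp <;> omega
    case right_neg =>
      intro p hp
      simp only [hs, Finset.mem_filter, Finset.mem_product, Finset.mem_range] at hp
      ext <;> simp <;> omega
    case h =>
      intro p hp
      simp only [hs, Finset.mem_filter, Finset.mem_product, Finset.mem_range] at hp
      obtain ⟨⟨h1, h2⟩, h3⟩ := hp
      obtain ⟨k, hk⟩ : ∃ k, p.2 = k + 1 := ⟨p.2 - 1, by omega⟩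
      have hσ : X.σ n k ≫ X.σ (n + 1) p.1 = X.σ n p.1 ≫ X.σ (n + 1) (k + 1) :=
        X.σσ n p.1 k (by omega) (by omega)
      rw [hk]
      simp only [Nat.add_sub_cancel, hσ]
      rw [← neg_smul]
      congr 1
      ring
  rw [key, Finset.sum_neg_distrib, add_neg_cancel]
end

section
/- For a duplicial module M, the Karoubi operator factors as κ_n = (1 − b_{n+1}d_n)(1 − d_{n-1}b_n) = (1 − d_{n-1}b_n)(1 − b_{n+1}d_n). -/
open CategoryTheory

universe v u

section Aux

variable {C : Type u} [Category.{v} C] [Preadditive C]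

lemma neg_one_pow_succ_smul {A B : C} (k : ℕ) (x : A ⟶ B) :
    ((-1:ℤ)^(k+1)) • x = -(((-1:ℤ)^k) • x) := by
  rw [pow_succ, mul_comm, neg_one_mul, neg_smul]

lemma sum_smul_comp {A B D : C} {m k : ℕ} (f : ℕ → (A ⟶ B)) (g : ℕ → (B ⟶ D)) :
    (∑ i ∈ Finset.range m, ((-1:ℤ)^i) • f i) ≫ (∑ j ∈ Finset.range k, ((-1:ℤ)^j) • g j)
      = ∑ p ∈ Finset.range m ×ˢ Finset.range k, ((-1:ℤ)^(p.1+p.2)) • (f p.1 ≫ g p.2) := by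
  rw [Preadditive.sum_comp, Finset.sum_product]
  refine Finset.sum_congr rfl fun i _ => ?_
  rw [Preadditive.zsmul_comp, Preadditive.comp_sum, Finset.smul_sum]
  refine Finset.sum_congr rfl fun j _ => ?_
  rw [Preadditive.comp_zsmul, smul_smul, ← pow_add]

end Aux

section Key

variable {C : Type u} [Category.{v} C] [Preadditive C] (X : DupMod C)

lemma d_comp_d (n : ℕ) : X.d n ≫ X.d (n+1) = 0 := by
  rw [DupMod.d, DupMod.d, sum_smul_comp]
  rw [← Finset.sum_filter_add_sum_filter_not (Finset.range (n+2) ×ˢ Finset.range (n+3))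
    (fun p => p.2 ≤ p.1)]
  have h1 : ∑ p ∈ (Finset.range (n+2) ×ˢ Finset.range (n+3)).filter (fun p => p.2 ≤ p.1),
      ((-1:ℤ)^(p.1+p.2)) • (X.σ n p.1 ≫ X.σ (n+1) p.2)
      = ∑ p ∈ (Finset.range (n+2) ×ˢ Finset.range (n+3)).filter (fun p => ¬ p.2 ≤ p.1),
      -(((-1:ℤ)^(p.1+p.2)) • (X.σ n p.1 ≫ X.σ (n+1) p.2)) := by
    refine Finset.sum_nbij' (fun p => (p.2, p.1+1)) (fun q => (q.2-1, q.1)) ?_ ?_ ?_ ?_ ?_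
    · rintro ⟨a,b⟩ hp
      simp only [Finset.mem_filter, Finset.mem_product, Finset.mem_range] at hp ⊢
      omega
    · rintro ⟨a,b⟩ hq
      simp only [Finset.mem_filter, Finset.mem_product, Finset.mem_range] at hq ⊢
      omega
    · rintro ⟨a,b⟩ hp
      simp only [Finset.mem_filter, Finset.mem_product, Finset.mem_range] at hp
      dsimp only
      simp only [Prod.mk.injEq, and_true, true_and]
      omega
    · rintro ⟨a,b⟩ hq
      simp only [Finset.mem_filter, Finset.mem_product, Finset.mem_range] at hq
      dsimp only
      simp only [Prod.mk.injEq, and_true, true_and]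
      omega
    · rintro ⟨a,b⟩ hp
      simp only [Finset.mem_filter, Finset.mem_product, Finset.mem_range] at hp
      obtain ⟨⟨ha, hb⟩, hba⟩ := hp
      dsimp only
      rw [X.σσ n b a hba (by omega), show b + (a+1) = (a+b)+1 by omega,
        neg_one_pow_succ_smul, neg_neg]
  rw [h1, Finset.sum_neg_distrib, neg_add_cancel]

lemma b_comp_b (n : ℕ) : X.b (n+1) ≫ X.b n = 0 := by
  rw [DupMod.b, DupMod.b, sum_smul_comp]
  rw [← Finset.sum_filter_add_sum_filter_not (Finset.range (n+3) ×ˢ Finset.range (n+2))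
    (fun p => p.1 ≤ p.2)]
  have h1 : ∑ p ∈ (Finset.range (n+3) ×ˢ Finset.range (n+2)).filter (fun p => p.1 ≤ p.2),
      ((-1:ℤ)^(p.1+p.2)) • (X.δ (n+1) p.1 ≫ X.δ n p.2)
      = ∑ p ∈ (Finset.range (n+3) ×ˢ Finset.range (n+2)).filter (fun p => ¬ p.1 ≤ p.2),
      -(((-1:ℤ)^(p.1+p.2)) • (X.δ (n+1) p.1 ≫ X.δ n p.2)) := by
    refine Finset.sum_nbij' (fun p => (p.2+1, p.1)) (fun q => (q.2, q.1-1)) ?_ ?_ ?_ ?_ ?_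
    · rintro ⟨a,b⟩ hp
      simp only [Finset.mem_filter, Finset.mem_product, Finset.mem_range] at hp ⊢
      omega
    · rintro ⟨a,b⟩ hq
      simp only [Finset.mem_filter, Finset.mem_product, Finset.mem_range] at hq ⊢
      omega
    · rintro ⟨a,b⟩ hp
      simp only [Finset.mem_filter, Finset.mem_product, Finset.mem_range] at hp
      dsimp only
      simp only [Prod.mk.injEq, and_true, true_and]
      omega
    · rintro ⟨a,b⟩ hq
      simp only [Finset.mem_filter, Finset.mem_product, Finset.mem_range] at hq
      dsimp only
      simp only [Prod.mk.injEq, and_true, true_and]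
      omega
    · rintro ⟨a,b⟩ hp
      simp only [Finset.mem_filter, Finset.mem_product, Finset.mem_range] at hp
      obtain ⟨⟨ha, hb⟩, hab⟩ := hp
      dsimp only
      rw [X.δδ n a b hab (by omega), show b+1+a = (a+b)+1 by omega,
        neg_one_pow_succ_smul, neg_neg]
  rw [h1, Finset.sum_neg_distrib, neg_add_cancel]

lemma kappa_zero_aux : X.d 0 ≫ X.b 0 = 𝟙 (X.M 0) - X.κ 0 := by
  have hd : X.d 0 = X.σ 0 0 - X.σ 0 1 := by
    simp [DupMod.d, Finset.sum_range_succ, sub_eq_add_neg]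
  have hb : X.b 0 = X.δ 0 0 - X.δ 0 1 := by
    simp [DupMod.b, Finset.sum_range_succ, sub_eq_add_neg]
  rw [hd, hb]
  simp only [DupMod.κ, Preadditive.sub_comp, Preadditive.comp_sub]
  rw [X.δσ_self 0 0 (by omega), X.δσ_succ 0 0 (by omega), X.δσ_self 0 1 (by omega)]
  abel

lemma key (n : ℕ) :
    X.d (n+1) ≫ X.b (n+1) = 𝟙 (X.M (n+1)) - X.b n ≫ X.d n - X.κ (n+1) := by
  have hbd : X.b n ≫ X.d n = ∑ q ∈ Finset.range (n+2) ×ˢ Finset.range (n+2),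
      ((-1:ℤ)^(q.1+q.2)) • (X.δ n q.1 ≫ X.σ n q.2) := by
    rw [DupMod.b, DupMod.d, sum_smul_comp]
  have hdiag : ∑ p ∈ (Finset.range (n+3) ×ˢ Finset.range (n+3)).filter (fun p => p.2 = p.1),
      ((-1:ℤ)^(p.1+p.2)) • (X.σ (n+1) p.1 ≫ X.δ (n+1) p.2) = (n+3) • 𝟙 (X.M (n+1)) := by
    have h : ∑ p ∈ (Finset.range (n+3) ×ˢ Finset.range (n+3)).filter (fun p => p.2 = p.1),
        ((-1:ℤ)^(p.1+p.2)) • (X.σ (n+1) p.1 ≫ X.δ (n+1) p.2)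
        = ∑ _i ∈ Finset.range (n+3), 𝟙 (X.M (n+1)) := by
      refine Finset.sum_nbij' (fun p => p.1) (fun i => (i, i)) ?_ ?_ ?_ ?_ ?_
      · rintro ⟨a,b⟩ hp
        simp only [Finset.mem_filter, Finset.mem_product, Finset.mem_range] at hp ⊢
        omega
      · intro i hi
        simp only [Finset.mem_filter, Finset.mem_product, Finset.mem_range, and_true,
          true_and] at hi ⊢
        omega
      · rintro ⟨a,b⟩ hp
        simp only [Finset.mem_filter, Finset.mem_product, Finset.mem_range] at hp
        dsimp only
        simp only [Prod.mk.injEq, and_true, true_and]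
        omega
      · intro i _
        rfl
      · rintro ⟨a,b⟩ hp
        simp only [Finset.mem_filter, Finset.mem_product, Finset.mem_range] at hp
        obtain ⟨⟨ha, -⟩, hb⟩ := hp
        dsimp only
        subst hb
        rw [X.δσ_self (n+1) b (by omega), Even.neg_one_pow ⟨b, rfl⟩, one_smul]
    rw [h, Finset.sum_const, Finset.card_range]
  have hsup : ∑ p ∈ ((Finset.range (n+3) ×ˢ Finset.range (n+3)).filter
      (fun p => ¬ p.2 = p.1)).filter (fun p => p.2 = p.1 + 1),
      ((-1:ℤ)^(p.1+p.2)) • (X.σ (n+1) p.1 ≫ X.δ (n+1) p.2)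
      = (n+2) • (-𝟙 (X.M (n+1))) := by
    have h : ∑ p ∈ ((Finset.range (n+3) ×ˢ Finset.range (n+3)).filter
        (fun p => ¬ p.2 = p.1)).filter (fun p => p.2 = p.1 + 1),
        ((-1:ℤ)^(p.1+p.2)) • (X.σ (n+1) p.1 ≫ X.δ (n+1) p.2)
        = ∑ _i ∈ Finset.range (n+2), -𝟙 (X.M (n+1)) := by
      refine Finset.sum_nbij' (fun p => p.1) (fun i => (i, i+1)) ?_ ?_ ?_ ?_ ?_
      · rintro ⟨a,b⟩ hp
        simp only [Finset.mem_filter, Finset.mem_product, Finset.mem_range] at hp ⊢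
        omega
      · intro i hi
        simp only [Finset.mem_filter, Finset.mem_product, Finset.mem_range, and_true,
          true_and] at hi ⊢
        omega
      · rintro ⟨a,b⟩ hp
        simp only [Finset.mem_filter, Finset.mem_product, Finset.mem_range] at hp
        dsimp only
        simp only [Prod.mk.injEq, and_true, true_and]
        omega
      · intro i _
        rfl
      · rintro ⟨a,b⟩ hp
        simp only [Finset.mem_filter, Finset.mem_product, Finset.mem_range] at hp
        obtain ⟨⟨⟨-, hb⟩, -⟩, hb2⟩ := hp
        dsimp only
        subst hb2
        rw [X.δσ_succ (n+1) a (by omega), show a + (a+1) = (a+a)+1 by omega,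
          neg_one_pow_succ_smul, Even.neg_one_pow ⟨a, rfl⟩, one_smul]
    rw [h, Finset.sum_const, Finset.card_range]
  have hsingle : ∑ p ∈ (((Finset.range (n+3) ×ˢ Finset.range (n+3)).filter
      (fun p => ¬ p.2 = p.1)).filter (fun p => ¬ p.2 = p.1 + 1)).filter
      (fun p => p = ((n+2 : ℕ), (0 : ℕ))),
      ((-1:ℤ)^(p.1+p.2)) • (X.σ (n+1) p.1 ≫ X.δ (n+1) p.2)
      = ((-1:ℤ)^(n+2)) • (X.σ (n+1) (n+2) ≫ X.δ (n+1) 0) := by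
    rw [Finset.filter_eq', if_pos (by
      simp only [Finset.mem_filter, Finset.mem_product, Finset.mem_range]
      omega), Finset.sum_singleton]
    rfl
  have hS : ∑ p ∈ (((Finset.range (n+3) ×ˢ Finset.range (n+3)).filter
      (fun p => ¬ p.2 = p.1)).filter (fun p => ¬ p.2 = p.1 + 1)).filter
      (fun p => ¬ p = ((n+2 : ℕ), (0 : ℕ))),
      ((-1:ℤ)^(p.1+p.2)) • (X.σ (n+1) p.1 ≫ X.δ (n+1) p.2)
      = ∑ q ∈ (Finset.range (n+2) ×ˢ Finset.range (n+2)).erase ((0 : ℕ), (n+1 : ℕ)),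
      -(((-1:ℤ)^(q.1+q.2)) • (X.δ n q.1 ≫ X.σ n q.2)) := by
    refine Finset.sum_nbij' (fun p => if p.2 < p.1 then (p.2, p.1 - 1) else (p.2 - 1, p.1))
      (fun q => if q.1 ≤ q.2 then (q.2 + 1, q.1) else (q.2, q.1 + 1)) ?_ ?_ ?_ ?_ ?_
    · rintro ⟨a,b⟩ hp
      simp only [Finset.mem_filter, Finset.mem_product, Finset.mem_range, Prod.mk.injEq,
        not_and] at hp
      dsimp only
      split_ifs
      all_goals
        simp only [Finset.mem_erase, Finset.mem_product, Finset.mem_range, Prod.mk.injEq,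
          not_and, ne_eq]
        omega
    · rintro ⟨a,b⟩ hq
      simp only [Finset.mem_erase, Finset.mem_product, Finset.mem_range, Prod.mk.injEq,
        not_and, ne_eq] at hq
      dsimp only
      split_ifs
      all_goals
        simp only [Finset.mem_filter, Finset.mem_product, Finset.mem_range, Prod.mk.injEq,
          not_and]
        omega
    · rintro ⟨a,b⟩ hp
      simp only [Finset.mem_filter, Finset.mem_product, Finset.mem_range, Prod.mk.injEq,
        not_and] at hp
      dsimp only
      split_ifs
      all_goals simp only [Prod.mk.injEq, and_true, true_and]
      all_goals omega
    · rintro ⟨a,b⟩ hq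
      simp only [Finset.mem_erase, Finset.mem_product, Finset.mem_range, Prod.mk.injEq,
        not_and, ne_eq] at hq
      dsimp only
      split_ifs
      all_goals simp only [Prod.mk.injEq, and_true, true_and]
      all_goals omega
    · rintro ⟨a,b⟩ hp
      simp only [Finset.mem_filter, Finset.mem_product, Finset.mem_range, Prod.mk.injEq,
        not_and] at hp
      obtain ⟨⟨⟨⟨ha, hb⟩, h1⟩, h2⟩, h3⟩ := hp
      dsimp only
      by_cases hba : b < a
      · rw [if_pos hba]
        dsimp only
        have hsig := X.δσ_lt n b (a - 1) (by omega) (by omega) (by omega)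
        rw [show a - 1 + 1 = a by omega] at hsig
        rw [hsig, show a + b = (b + (a - 1)) + 1 by omega, neg_one_pow_succ_smul]
      · rw [if_neg hba]
        dsimp only
        have hsig := X.δσ_gt n (b - 1) a (by omega) (by omega)
        rw [show b - 1 + 1 = b by omega] at hsig
        rw [hsig, show a + b = ((b - 1) + a) + 1 by omega, neg_one_pow_succ_smul]
  have hmem : ((0 : ℕ), (n+1 : ℕ)) ∈ Finset.range (n+2) ×ˢ Finset.range (n+2) := by
    simp only [Finset.mem_product, Finset.mem_range]
    omega
  rw [DupMod.d, DupMod.b, sum_smul_comp, hbd]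
  rw [← Finset.sum_filter_add_sum_filter_not (Finset.range (n+3) ×ˢ Finset.range (n+3))
    (fun p => p.2 = p.1)]
  rw [← Finset.sum_filter_add_sum_filter_not ((Finset.range (n+3) ×ˢ Finset.range (n+3)).filter
    (fun p => ¬ p.2 = p.1)) (fun p => p.2 = p.1 + 1)]
  rw [← Finset.sum_filter_add_sum_filter_not (((Finset.range (n+3) ×ˢ
    Finset.range (n+3)).filter (fun p => ¬ p.2 = p.1)).filter (fun p => ¬ p.2 = p.1 + 1))
    (fun p => p = ((n+2 : ℕ), (0 : ℕ)))]
  rw [hdiag, hsup, hsingle, hS]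
  rw [Finset.sum_neg_distrib]
  rw [← Finset.sum_erase_add (Finset.range (n+2) ×ˢ Finset.range (n+2)) _ hmem]
  simp only [DupMod.κ]
  rw [show ((-1:ℤ)^(n+2)) • (X.σ (n+1) (n+2) ≫ X.δ (n+1) 0)
      = -(((-1:ℤ)^(n+1)) • (X.σ (n+1) (n+2) ≫ X.δ (n+1) 0)) from neg_one_pow_succ_smul _ _]
  rw [smul_sub, show (n+3 : ℕ) = (n+2) + 1 from rfl, succ_nsmul, smul_neg, Nat.zero_add]
  abel

lemma kappa_succ (n : ℕ) :
    X.κ (n+1) = 𝟙 (X.M (n+1)) - X.b n ≫ X.d n - X.d (n+1) ≫ X.b (n+1) := by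
  rw [key X n]
  abel

end Key

/-- For a duplicial module `M`, the Karoubi operator factors as
`κ_n = (1 − b_{n+1}d_n)(1 − d_{n-1}b_n) = (1 − d_{n-1}b_n)(1 − b_{n+1}d_n)`
(at `n = 0` the factor `1 − d_{-1}b_0` is absent). Products of operators are
composed right factor first. -/
theorem karoubi_factorization {C : Type u} [Category.{v} C] [Preadditive C]
    (X : DupMod C) :
    (∀ n : ℕ, X.κ (n + 1)
        = (𝟙 (X.M (n + 1)) - X.b n ≫ X.d n)
            ≫ (𝟙 (X.M (n + 1)) - X.d (n + 1) ≫ X.b (n + 1))) ∧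
    (∀ n : ℕ, X.κ (n + 1)
        = (𝟙 (X.M (n + 1)) - X.d (n + 1) ≫ X.b (n + 1))
            ≫ (𝟙 (X.M (n + 1)) - X.b n ≫ X.d n)) ∧
    (X.κ 0 = 𝟙 (X.M 0) - X.d 0 ≫ X.b 0) := by
  refine ⟨fun n => ?_, fun n => ?_, ?_⟩
  · have cross : (X.b n ≫ X.d n) ≫ X.d (n+1) ≫ X.b (n+1) = 0 := by
      have h0 : X.d n ≫ X.d (n+1) ≫ X.b (n+1) = 0 := by
        rw [← Category.assoc, d_comp_d X n, Limits.zero_comp]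
      rw [Category.assoc, h0, Limits.comp_zero]
    rw [kappa_succ X n]
    simp only [Preadditive.sub_comp, Preadditive.comp_sub, Category.id_comp, Category.comp_id]
    rw [cross, sub_zero]
  · have cross : (X.d (n+1) ≫ X.b (n+1)) ≫ X.b n ≫ X.d n = 0 := by
      have h0 : X.b (n+1) ≫ X.b n ≫ X.d n = 0 := by
        rw [← Category.assoc, b_comp_b X n, Limits.zero_comp]
      rw [Category.assoc, h0, Limits.comp_zero]
    rw [kappa_succ X n]
    simp only [Preadditive.sub_comp, Preadditive.comp_sub, Category.id_comp, Category.comp_id]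
    rw [cross, sub_zero]
    abel
  · rw [kappa_zero_aux X]
    abel
end

section
/- For a duplicial module M, the Karoubi operator satisfies: κ_{n+1} s_{n,0} = 0; κ_{n+1} s_{n,i} = −s_{n,i-1} κ_n for 1 ≤ i ≤ n; and κ_{n+1} s_{n,n+1} = (s_{n,n+1} − s_{n,n}) κ_n. -/
open CategoryTheory

universe v u

/-- For a duplicial module `M`, the Karoubi operator satisfies
`κ_{n+1} s_{n,0} = 0`; `κ_{n+1} s_{n,i} = −s_{n,i-1} κ_n` for `1 ≤ i ≤ n`
(written with `i = j+1`); and `κ_{n+1} s_{n,n+1} = (s_{n,n+1} − s_{n,n}) κ_n`. -/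
theorem karoubi_degeneracy {C : Type u} [Category.{v} C] [Preadditive C]
    (X : DupMod C) :
    (∀ n : ℕ, X.σ n 0 ≫ X.κ (n + 1) = 0) ∧
    (∀ n j : ℕ, j + 1 ≤ n →
      X.σ n (j + 1) ≫ X.κ (n + 1) = -(X.κ n ≫ X.σ n j)) ∧
    (∀ n : ℕ, X.σ n (n + 1) ≫ X.κ (n + 1)
        = X.κ n ≫ (X.σ n (n + 1) - X.σ n n)) := by
  refine ⟨?_, ?_, ?_⟩
  · intro n
    have hA : X.σ n 0 ≫ X.σ (n + 1) (n + 2) ≫ X.δ (n + 1) 0 = X.σ n (n + 1) := by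
      rw [← Category.assoc, ← X.σσ n 0 (n + 1) (by omega) (by omega),
        Category.assoc, X.δσ_self (n + 1) 0 (by omega), Category.comp_id]
    have hB : X.σ n 0 ≫ X.δ n 0 ≫ X.σ n (n + 1) = X.σ n (n + 1) := by
      rw [← Category.assoc, X.δσ_self n 0 (by omega), Category.id_comp]
    show X.σ n 0 ≫ (((-1 : ℤ) ^ (n + 1)) •
      (X.σ (n + 1) (n + 2) ≫ X.δ (n + 1) 0 - X.δ n 0 ≫ X.σ n (n + 1))) = 0
    rw [Preadditive.comp_zsmul, Preadditive.comp_sub, hA, hB, sub_self, smul_zero]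
  · intro n j h
    obtain ⟨m, rfl⟩ : ∃ m, n = m + 1 := ⟨n - 1, by omega⟩
    have hA : X.σ (m + 1) (j + 1) ≫ X.σ (m + 2) (m + 3) ≫ X.δ (m + 2) 0
        = (X.σ (m + 1) (m + 2) ≫ X.δ (m + 1) 0) ≫ X.σ (m + 1) j := by
      rw [← Category.assoc, ← X.σσ (m + 1) (j + 1) (m + 2) (by omega) (by omega),
        Category.assoc, X.δσ_lt (m + 1) 0 j (by omega) (by omega) (by omega),
        ← Category.assoc, Category.assoc]
    have hB : X.σ (m + 1) (j + 1) ≫ X.δ (m + 1) 0 ≫ X.σ (m + 1) (m + 2)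
        = (X.δ m 0 ≫ X.σ m (m + 1)) ≫ X.σ (m + 1) j := by
      rw [← Category.assoc, X.δσ_lt m 0 j (by omega) (by omega) (by omega),
        Category.assoc, ← X.σσ m j (m + 1) (by omega) (by omega),
        ← Category.assoc, Category.assoc]
    show X.σ (m + 1) (j + 1) ≫ (((-1 : ℤ) ^ (m + 1 + 1)) •
        (X.σ (m + 2) (m + 3) ≫ X.δ (m + 2) 0 - X.δ (m + 1) 0 ≫ X.σ (m + 1) (m + 2)))
      = -((((-1 : ℤ) ^ (m + 1)) •
        (X.σ (m + 1) (m + 2) ≫ X.δ (m + 1) 0 - X.δ m 0 ≫ X.σ m (m + 1))) ≫ X.σ (m + 1) j)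
    rw [Preadditive.comp_zsmul, Preadditive.zsmul_comp, Preadditive.comp_sub,
      Preadditive.sub_comp, hA, hB, ← neg_smul, pow_succ (-1 : ℤ) (m + 1), mul_neg_one]
  · intro n
    match n with
    | 0 =>
      have hA : X.σ 0 1 ≫ X.σ 1 2 ≫ X.δ 1 0
          = (X.σ 0 1 ≫ X.δ 0 0) ≫ X.σ 0 0 := by
        rw [← Category.assoc, ← X.σσ 0 1 1 (by omega) (by omega),
          Category.assoc, X.δσ_lt 0 0 0 (by omega) (by omega) (by omega),
          ← Category.assoc, Category.assoc]
      show X.σ 0 1 ≫ (((-1 : ℤ) ^ 1) •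
          (X.σ 1 2 ≫ X.δ 1 0 - X.δ 0 0 ≫ X.σ 0 1))
        = (X.σ 0 1 ≫ X.δ 0 0) ≫ (X.σ 0 1 - X.σ 0 0)
      rw [Preadditive.comp_zsmul, Preadditive.comp_sub, Preadditive.comp_sub, hA,
        ← Category.assoc (X.σ 0 1) (X.δ 0 0) (X.σ 0 1),
        pow_one, neg_smul, one_smul, neg_sub]
    | m + 1 =>
      have hA : X.σ (m + 1) (m + 2) ≫ X.σ (m + 2) (m + 3) ≫ X.δ (m + 2) 0
          = (X.σ (m + 1) (m + 2) ≫ X.δ (m + 1) 0) ≫ X.σ (m + 1) (m + 1) := by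
        rw [← Category.assoc, ← X.σσ (m + 1) (m + 2) (m + 2) (by omega) (by omega),
          Category.assoc, X.δσ_lt (m + 1) 0 (m + 1) (by omega) (by omega) (by omega),
          ← Category.assoc, Category.assoc]
      have hu : X.σ m (m + 1) ≫ X.σ (m + 1) (m + 2) = X.σ m (m + 1) ≫ X.σ (m + 1) (m + 1) :=
        (X.σσ m (m + 1) (m + 1) (by omega) (by omega)).symm
      show X.σ (m + 1) (m + 2) ≫ (((-1 : ℤ) ^ (m + 1 + 1)) •
          (X.σ (m + 2) (m + 3) ≫ X.δ (m + 2) 0 - X.δ (m + 1) 0 ≫ X.σ (m + 1) (m + 2)))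
        = (((-1 : ℤ) ^ (m + 1)) •
          (X.σ (m + 1) (m + 2) ≫ X.δ (m + 1) 0 - X.δ m 0 ≫ X.σ m (m + 1)))
            ≫ (X.σ (m + 1) (m + 2) - X.σ (m + 1) (m + 1))
      have hu' : (X.δ m 0 ≫ X.σ m (m + 1)) ≫ X.σ (m + 1) (m + 2)
          = (X.δ m 0 ≫ X.σ m (m + 1)) ≫ X.σ (m + 1) (m + 1) := by
        rw [Category.assoc, Category.assoc, hu]
      rw [Preadditive.comp_zsmul, Preadditive.comp_sub, Preadditive.zsmul_comp,
        Preadditive.sub_comp, Preadditive.comp_sub, Preadditive.comp_sub, hA,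
        ← Category.assoc (X.σ (m + 1) (m + 2)) (X.δ (m + 1) 0) (X.σ (m + 1) (m + 2)),
        hu', sub_self, sub_zero, pow_succ (-1 : ℤ) (m + 1), mul_neg_one, neg_smul, ← smul_neg, neg_sub]
end

section
/- For a duplicial module M, the n-th power of the Karoubi operator composed with the extra degeneracy satisfies κ_n^m s_{n,n+1} = Σ_{i=0}^m (-1)^m s_{n,n-m+1} for 0 ≤ m ≤ n, and in particular κ_n^n annihilates every ordinary degeneracy: κ_n^n s_{n-1,i} = 0 for 0 ≤ i ≤ n-1. -/
open CategoryTheory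

universe v u

section Helpers

variable {C : Type u} [Category.{v} C] [Preadditive C] (X : DupMod C)

lemma cpow_add {A : C} (f : A ⟶ A) (a b : ℕ) :
    cpow f (a + b) = cpow f a ≫ cpow f b := by
  induction a with
  | zero => simp [cpow]
  | succ a ih =>
    have : a + 1 + b = (a + b) + 1 := by omega
    rw [this, cpow, cpow, ih, Category.assoc]

lemma κ_succ (n : ℕ) : X.κ (n + 1) = ((-1 : ℤ) ^ (n + 1)) •
    (X.σ (n + 1) (n + 2) ≫ X.δ (n + 1) 0 - X.δ n 0 ≫ X.σ n (n + 1)) := rfl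

lemma relA (n : ℕ) : X.σ n 0 ≫ X.κ (n + 1) = 0 := by
  have e1 : X.σ n 0 ≫ X.σ (n + 1) (n + 2) = X.σ n (n + 1) ≫ X.σ (n + 1) 0 :=
    (X.σσ n 0 (n + 1) (by omega) (by omega)).symm
  have e2 : X.σ (n + 1) 0 ≫ X.δ (n + 1) 0 = 𝟙 _ := X.δσ_self (n + 1) 0 (by omega)
  have e3 : X.σ n 0 ≫ X.δ n 0 = 𝟙 _ := X.δσ_self n 0 (by omega)
  rw [κ_succ, Preadditive.comp_zsmul, Preadditive.comp_sub,
    ← Category.assoc, ← Category.assoc, e1, e3, Category.assoc, e2,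
    Category.comp_id, Category.id_comp, sub_self, smul_zero]

lemma relB (n i : ℕ) (h : i ≤ n) :
    X.σ (n + 1) (i + 1) ≫ X.κ (n + 2) = - (X.κ (n + 1) ≫ X.σ (n + 1) i) := by
  have e1 : X.σ (n + 1) (i + 1) ≫ X.σ (n + 2) (n + 3) =
      X.σ (n + 1) (n + 2) ≫ X.σ (n + 2) (i + 1) :=
    (X.σσ (n + 1) (i + 1) (n + 2) (by omega) (by omega)).symm
  have e2 : X.σ (n + 2) (i + 1) ≫ X.δ (n + 2) 0 = X.δ (n + 1) 0 ≫ X.σ (n + 1) i :=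
    X.δσ_lt (n + 1) 0 i (by omega) (by omega) (by omega)
  have e3 : X.σ (n + 1) (i + 1) ≫ X.δ (n + 1) 0 = X.δ n 0 ≫ X.σ n i :=
    X.δσ_lt n 0 i (by omega) (by omega) (by omega)
  have e4 : X.σ n i ≫ X.σ (n + 1) (n + 2) = X.σ n (n + 1) ≫ X.σ (n + 1) i :=
    (X.σσ n i (n + 1) (by omega) (by omega)).symm
  rw [κ_succ X (n + 1), κ_succ X n, Preadditive.comp_zsmul, Preadditive.comp_sub,
    Preadditive.zsmul_comp, Preadditive.sub_comp, ← neg_zsmul,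
    show (-(-1 : ℤ) ^ (n + 1)) = (-1 : ℤ) ^ (n + 1 + 1) from by ring]
  congr 1
  simp only [Category.assoc]
  rw [reassoc_of% e1, e2, reassoc_of% e3, e4]

lemma relC (n : ℕ) :
    X.σ (n + 1) (n + 2) ≫ X.κ (n + 2) =
      X.κ (n + 1) ≫ (X.σ (n + 1) (n + 2) - X.σ (n + 1) (n + 1)) := by
  have e1 : X.σ (n + 1) (n + 2) ≫ X.σ (n + 2) (n + 3) =
      X.σ (n + 1) (n + 2) ≫ X.σ (n + 2) (n + 2) := by
    rw [X.σσ (n + 1) (n + 2) (n + 2) (by omega) (by omega)]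
  have e2 : X.σ (n + 2) (n + 2) ≫ X.δ (n + 2) 0 =
      X.δ (n + 1) 0 ≫ X.σ (n + 1) (n + 1) :=
    X.δσ_lt (n + 1) 0 (n + 1) (by omega) (by omega) (by omega)
  have e3 : X.σ n (n + 1) ≫ X.σ (n + 1) (n + 2) = X.σ n (n + 1) ≫ X.σ (n + 1) (n + 1) := by
    rw [X.σσ n (n + 1) (n + 1) (by omega) (by omega)]
  rw [κ_succ X (n + 1), κ_succ X n, Preadditive.comp_zsmul, Preadditive.comp_sub,
    Preadditive.zsmul_comp]
  have key : X.σ (n + 1) (n + 2) ≫ (X.σ (n + 2) (n + 3) ≫ X.δ (n + 2) 0)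
      - X.σ (n + 1) (n + 2) ≫ (X.δ (n + 1) 0 ≫ X.σ (n + 1) (n + 2))
      = - ((X.σ (n + 1) (n + 2) ≫ X.δ (n + 1) 0 - X.δ n 0 ≫ X.σ n (n + 1)) ≫
          (X.σ (n + 1) (n + 2) - X.σ (n + 1) (n + 1))) := by
    simp only [Preadditive.sub_comp, Preadditive.comp_sub, Category.assoc]
    rw [reassoc_of% e1, e2, e3]
    abel
  rw [key, smul_neg, ← neg_zsmul]
  congr 1
  ring

lemma relD (m j n : ℕ) (hm : m ≤ j) (hj : j ≤ n) :
    X.σ n j ≫ cpow (X.κ (n + 1)) m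
      = ((-1 : ℤ) ^ m) • (cpow (X.κ n) m ≫ X.σ n (j - m)) := by
  induction m generalizing j with
  | zero => simp [cpow]
  | succ m ih =>
    obtain ⟨j', rfl⟩ : ∃ j', j = j' + 1 := ⟨j - 1, by omega⟩
    obtain ⟨n', rfl⟩ : ∃ n', n = n' + 1 := ⟨n - 1, by omega⟩
    rw [cpow, ← Category.assoc, relB X n' j' (by omega), Preadditive.neg_comp,
      Category.assoc, ih j' (by omega) (by omega),
      Preadditive.comp_zsmul, ← neg_zsmul]
    have hidx : j' + 1 - (m + 1) = j' - m := by omega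
    rw [hidx, cpow, show ((-1 : ℤ) ^ (m + 1)) = -(-1 : ℤ) ^ m from by ring]
    simp only [Category.assoc]

lemma part1 (n m : ℕ) (h : m ≤ n) :
    X.σ n (n + 1) ≫ cpow (X.κ (n + 1)) m
      = cpow (X.κ n) m
          ≫ ∑ i ∈ Finset.range (m + 1), ((-1 : ℤ) ^ i) • X.σ n (n + 1 - i) := by
  induction m with
  | zero => simp [cpow]
  | succ m ih =>
    obtain ⟨n', rfl⟩ : ∃ n', n = n' + 1 := ⟨n - 1, by omega⟩
    have h1 : n' + 1 + 1 - (m + 1) = n' + 1 - m := by omega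
    have hsum : (∑ i ∈ Finset.range (m + 1 + 1), ((-1 : ℤ) ^ i) • X.σ (n' + 1) (n' + 1 + 1 - i))
        = (∑ i ∈ Finset.range (m + 1), ((-1 : ℤ) ^ i) • X.σ (n' + 1) (n' + 1 + 1 - i))
          - ((-1 : ℤ) ^ m) • X.σ (n' + 1) (n' + 1 - m) := by
      rw [Finset.sum_range_succ, h1,
        show ((-1 : ℤ) ^ (m + 1)) = -(-1 : ℤ) ^ m from by ring, neg_zsmul]
      abel
    rw [cpow, ← Category.assoc, relC, Category.assoc, Preadditive.sub_comp,
      Preadditive.comp_sub, ih (by omega),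
      relD X m (n' + 1) (n' + 1) (by omega) (by omega), hsum, cpow]
    simp only [Preadditive.comp_sub, Preadditive.comp_zsmul, Category.assoc]

/-- auxiliary: part 2 -/
lemma part2 (n i : ℕ) (h : i ≤ n) :
    X.σ n i ≫ cpow (X.κ (n + 1)) (n + 1) = 0 := by
  have hsplit : cpow (X.κ (n + 1)) (n + 1)
      = cpow (X.κ (n + 1)) i ≫ cpow (X.κ (n + 1)) (n + 1 - i) := by
    rw [← cpow_add]
    congr 1
    omega
  rw [hsplit, ← Category.assoc,
    relD X i i n (le_refl i) h, Nat.sub_self]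
  obtain ⟨k, hk⟩ : ∃ k, n + 1 - i = k + 1 := ⟨n - i, by omega⟩
  rw [hk, cpow, Preadditive.zsmul_comp, Category.assoc, ← Category.assoc (X.σ n 0),
    relA]
  simp

end Helpers

/-- For a duplicial module `M`, the powers of the Karoubi operator composed
with the extra degeneracy satisfy
`κ_{n+1}^m s_{n,n+1} = (∑_{i=0}^m (-1)^i s_{n,n+1-i}) κ_n^m` for `0 ≤ m ≤ n`, and in
particular `κ_{n+1}^{n+1}` annihilates every ordinary degeneracy:
`κ_{n+1}^{n+1} s_{n,i} = 0` for `0 ≤ i ≤ n`. -/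
theorem karoubi_power_degeneracy {C : Type u} [Category.{v} C] [Preadditive C]
    (X : DupMod C) :
    (∀ n m : ℕ, m ≤ n →
      X.σ n (n + 1) ≫ cpow (X.κ (n + 1)) m
        = cpow (X.κ n) m
            ≫ ∑ i ∈ Finset.range (m + 1), ((-1 : ℤ) ^ i) • X.σ n (n + 1 - i)) ∧
    (∀ n i : ℕ, i ≤ n → X.σ n i ≫ cpow (X.κ (n + 1)) (n + 1) = 0) := by
  exact ⟨part1 X, part2 X⟩
end

section
/- For a duplicial module M, the Dwyer–Kan operator π_n = (-1)^n ∂_{n+1,0} κ_{n+1}^n s_{n,n+1} satisfies π_n = κ_n^n − b_{n+1} κ_n^n d_n. -/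
open CategoryTheory

universe v u

/-- The Dwyer–Kan operator `π_n = (-1)^n ∂_{n+1,0} κ_{n+1}^n s_{n,n+1} : M_n → M_n`. -/
def DupMod.π {C : Type u} [Category.{v} C] [Preadditive C] (X : DupMod C) (n : ℕ) :
    X.M n ⟶ X.M n :=
  ((-1 : ℤ) ^ n) • (X.σ n (n + 1) ≫ cpow (X.κ (n + 1)) n ≫ X.δ n 0)
section Aux
open Finset
set_option linter.unusedSectionVars false
namespace DupMod

variable {C : Type u} [Category.{v} C] [Preadditive C] (X : DupMod C)

lemma κ_succ (n : ℕ) : X.κ (n + 1) = ((-1 : ℤ) ^ (n + 1)) •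
    (X.σ (n + 1) (n + 2) ≫ X.δ (n + 1) 0 - X.δ n 0 ≫ X.σ n (n + 1)) := rfl

lemma cpow_succ' {A : C} (f : A ⟶ A) (m : ℕ) : cpow f (m + 1) = cpow f m ≫ f := by
  induction m with
  | zero => simp [cpow]
  | succ m ih =>
      conv_lhs => rw [show cpow f (m + 1 + 1) = f ≫ cpow f (m + 1) from rfl, ih]
      rw [← Category.assoc]
      rfl

lemma cpow_add {A : C} (f : A ⟶ A) (a b : ℕ) :
    cpow f (a + b) = cpow f a ≫ cpow f b := by
  induction a with
  | zero => simp [cpow]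
  | succ a ih =>
      rw [show a + 1 + b = (a + b) + 1 from by omega,
        show cpow f ((a + b) + 1) = f ≫ cpow f (a + b) from rfl, ih,
        show cpow f (a + 1) = f ≫ cpow f a from rfl, Category.assoc]

lemma sigma_zero_kappa (n : ℕ) : X.σ n 0 ≫ X.κ (n + 1) = 0 := by
  have h1 : X.σ n 0 ≫ X.σ (n + 1) (n + 2) = X.σ n (n + 1) ≫ X.σ (n + 1) 0 :=
    (X.σσ n 0 (n + 1) (Nat.zero_le _) le_rfl).symm
  rw [κ_succ, Preadditive.comp_zsmul, Preadditive.comp_sub,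
    ← Category.assoc, h1, Category.assoc, X.δσ_self (n + 1) 0 (by omega), Category.comp_id,
    ← Category.assoc, X.δσ_self n 0 (by omega), Category.id_comp, sub_self, smul_zero]

lemma sigma_kappa (n j : ℕ) (h1 : j + 1 ≤ n) :
    X.σ n (j + 1) ≫ X.κ (n + 1) = -(X.κ n ≫ X.σ n j) := by
  obtain ⟨m, rfl⟩ : ∃ m, n = m + 1 := ⟨n - 1, by omega⟩
  have hj : j ≤ m := by omega
  have T1 : X.σ (m + 1) (j + 1) ≫ X.σ (m + 2) (m + 3) ≫ X.δ (m + 2) 0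
      = X.σ (m + 1) (m + 2) ≫ X.δ (m + 1) 0 ≫ X.σ (m + 1) j := by
    rw [← Category.assoc, ← X.σσ (m + 1) (j + 1) (m + 2) (by omega) le_rfl, Category.assoc,
      X.δσ_lt (m + 1) 0 j (by omega) (by omega) (by omega)]
  have T2 : X.σ (m + 1) (j + 1) ≫ X.δ (m + 1) 0 ≫ X.σ (m + 1) (m + 2)
      = X.δ m 0 ≫ X.σ m (m + 1) ≫ X.σ (m + 1) j := by
    rw [← Category.assoc, X.δσ_lt m 0 j (by omega) (by omega) (by omega), Category.assoc,
      X.σσ m j (m + 1) (by omega) le_rfl]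
  rw [κ_succ, κ_succ, Preadditive.comp_zsmul, Preadditive.comp_sub, T1, T2,
    Preadditive.zsmul_comp, Preadditive.sub_comp, Category.assoc, Category.assoc,
    ← neg_smul]
  congr 1
  rw [pow_succ ((-1 : ℤ)) (m + 1)]
  ring

end DupMod
end Aux
section Aux2
open Finset
set_option linter.unusedSectionVars false
namespace DupMod

variable {C : Type u} [Category.{v} C] [Preadditive C] (X : DupMod C)

lemma sigma_top_kappa (n : ℕ) :
    X.σ n (n + 1) ≫ X.κ (n + 1) = X.κ n ≫ (X.σ n (n + 1) - X.σ n n) := by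
  cases n with
  | zero =>
      show X.σ 0 1 ≫ X.κ 1 = (X.σ 0 1 ≫ X.δ 0 0) ≫ (X.σ 0 1 - X.σ 0 0)
      have T1 : X.σ 0 1 ≫ X.σ 1 2 ≫ X.δ 1 0 = X.σ 0 1 ≫ X.δ 0 0 ≫ X.σ 0 0 := by
        rw [← Category.assoc, ← X.σσ 0 1 1 le_rfl le_rfl, Category.assoc,
          X.δσ_lt 0 0 0 le_rfl le_rfl (by omega)]
      simp only [κ_succ, Preadditive.comp_zsmul, Preadditive.zsmul_comp,
        Preadditive.comp_sub, Preadditive.sub_comp, Category.assoc]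
      rw [T1]
      module
  | succ m =>
      have T1 : X.σ (m + 1) (m + 2) ≫ X.σ (m + 2) (m + 3) ≫ X.δ (m + 2) 0
          = X.σ (m + 1) (m + 2) ≫ X.δ (m + 1) 0 ≫ X.σ (m + 1) (m + 1) := by
        rw [← Category.assoc, ← X.σσ (m + 1) (m + 2) (m + 2) le_rfl le_rfl, Category.assoc,
          X.δσ_lt (m + 1) 0 (m + 1) (by omega) (by omega) (by omega)]
      have T2 : X.σ m (m + 1) ≫ X.σ (m + 1) (m + 1) = X.σ m (m + 1) ≫ X.σ (m + 1) (m + 2) := by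
        rw [X.σσ m (m + 1) (m + 1) le_rfl le_rfl]
      simp only [κ_succ, Preadditive.comp_zsmul, Preadditive.zsmul_comp,
        Preadditive.comp_sub, Preadditive.sub_comp, Category.assoc,
        show m + 1 + 1 = m + 2 from rfl, show m + 1 + 2 = m + 3 from rfl]
      rw [T1, T2, pow_succ ((-1 : ℤ)) (m + 1)]
      module

lemma kappa_delta (n j : ℕ) (h1 : 1 ≤ j) (h2 : j ≤ n) :
    X.κ (n + 1) ≫ X.δ n j = -(X.δ n (j + 1) ≫ X.κ n) := by
  obtain ⟨m, rfl⟩ : ∃ m, n = m + 1 := ⟨n - 1, by omega⟩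
  obtain ⟨i, rfl⟩ : ∃ i, j = i + 1 := ⟨j - 1, by omega⟩
  have hi : i ≤ m := by omega
  have T1 : X.σ (m + 2) (m + 3) ≫ X.δ (m + 2) 0 ≫ X.δ (m + 1) (i + 1)
      = X.δ (m + 1) (i + 2) ≫ X.σ (m + 1) (m + 2) ≫ X.δ (m + 1) 0 := by
    rw [X.δδ (m + 1) 0 (i + 1) (by omega) (by omega), ← Category.assoc,
      X.δσ_lt (m + 1) (i + 2) (m + 2) (by omega) (by omega) (by omega), Category.assoc]
  have T2 : X.δ (m + 1) 0 ≫ X.σ (m + 1) (m + 2) ≫ X.δ (m + 1) (i + 1)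
      = X.δ (m + 1) (i + 2) ≫ X.δ m 0 ≫ X.σ m (m + 1) := by
    rw [X.δσ_lt m (i + 1) (m + 1) (by omega) (by omega) (by omega), ← Category.assoc,
      X.δδ m 0 (i + 1) (by omega) (by omega), Category.assoc]
  simp only [κ_succ, Preadditive.comp_zsmul, Preadditive.zsmul_comp,
    Preadditive.comp_sub, Preadditive.sub_comp, Preadditive.comp_neg, Preadditive.neg_comp,
    Category.assoc, show m + 1 + 1 = m + 2 from rfl, show m + 1 + 2 = m + 3 from rfl,
    show i + 1 + 1 = i + 2 from rfl]
  rw [T1, T2, pow_succ ((-1 : ℤ)) (m + 1)]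
  module

lemma kappa_delta_top (n : ℕ) : X.κ (n + 1) ≫ X.δ n (n + 1) = 0 := by
  have T1 : X.σ (n + 1) (n + 2) ≫ X.δ (n + 1) 0 ≫ X.δ n (n + 1) = X.δ n 0 := by
    rw [X.δδ n 0 (n + 1) (by omega) (by omega), ← Category.assoc,
      X.δσ_self (n + 1) (n + 2) le_rfl, Category.id_comp]
  have T2 : X.δ n 0 ≫ X.σ n (n + 1) ≫ X.δ n (n + 1) = X.δ n 0 := by
    rw [X.δσ_self n (n + 1) le_rfl, Category.comp_id]
  simp only [κ_succ, Preadditive.zsmul_comp, Preadditive.sub_comp, Category.assoc,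
    show n + 1 + 1 = n + 2 from rfl]
  rw [T1, T2, sub_self, smul_zero]

end DupMod
end Aux2
section Aux3
open Finset
set_option linter.unusedSectionVars false
namespace DupMod

variable {C : Type u} [Category.{v} C] [Preadditive C] (X : DupMod C)

lemma sigma_cpow (N m k : ℕ) (h : m + k ≤ N) :
    X.σ N (m + k) ≫ cpow (X.κ (N + 1)) m = ((-1 : ℤ) ^ m) • (cpow (X.κ N) m ≫ X.σ N k) := by
  induction m with
  | zero => simp [cpow]
  | succ m ih =>
      rw [show m + 1 + k = (m + k) + 1 from by omega,
        show cpow (X.κ (N + 1)) (m + 1) = X.κ (N + 1) ≫ cpow (X.κ (N + 1)) m from rfl,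
        ← Category.assoc, X.sigma_kappa N (m + k) (by omega), Preadditive.neg_comp,
        Category.assoc, ih (by omega),
        show cpow (X.κ N) (m + 1) = X.κ N ≫ cpow (X.κ N) m from rfl]
      simp only [Preadditive.comp_zsmul, Category.assoc, pow_succ]
      module

lemma sigma_cpow_zero (N i M : ℕ) (hi : i ≤ N) (hM : i < M) :
    X.σ N i ≫ cpow (X.κ (N + 1)) M = 0 := by
  obtain ⟨r, rfl⟩ : ∃ r, M = i + (r + 1) := ⟨M - i - 1, by omega⟩
  have h : X.σ N i ≫ cpow (X.κ (N + 1)) i = ((-1 : ℤ) ^ i) • (cpow (X.κ N) i ≫ X.σ N 0) := by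
    simpa using X.sigma_cpow N i 0 (by omega)
  rw [cpow_add (X.κ (N + 1)) i (r + 1)]
  rw [← Category.assoc, h, Preadditive.zsmul_comp, Category.assoc]
  rw [show cpow (X.κ (N + 1)) (r + 1) = X.κ (N + 1) ≫ cpow (X.κ (N + 1)) r from rfl]
  rw [← Category.assoc (X.σ N 0), X.sigma_zero_kappa N, Limits.zero_comp, Limits.comp_zero,
    smul_zero]

lemma sigma_top_cpow (n m : ℕ) (h : m ≤ n) :
    X.σ n (n + 1) ≫ cpow (X.κ (n + 1)) m
      = cpow (X.κ n) m ≫ ∑ i ∈ Finset.range (m + 1), ((-1 : ℤ) ^ i) • X.σ n (n + 1 - i) := by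
  induction m with
  | zero => simp [cpow]
  | succ m ih =>
      have key : (∑ i ∈ Finset.range (m + 1), ((-1 : ℤ) ^ i) • X.σ n (n + 1 - i)) ≫ X.κ (n + 1)
          = X.κ n ≫ ∑ i ∈ Finset.range (m + 2), ((-1 : ℤ) ^ i) • X.σ n (n + 1 - i) := by
        have L : (∑ i ∈ Finset.range (m + 1), ((-1 : ℤ) ^ i) • X.σ n (n + 1 - i)) ≫ X.κ (n + 1)
            = (∑ i ∈ Finset.range m, ((-1 : ℤ) ^ i) • (X.κ n ≫ X.σ n (n - (i + 1))))
              + (X.κ n ≫ X.σ n (n + 1) - X.κ n ≫ X.σ n n) := by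
          rw [Preadditive.sum_comp, Finset.sum_range_succ']
          congr 1
          · refine Finset.sum_congr rfl fun i hi => ?_
            have hii : i < m := Finset.mem_range.mp hi
            rw [Preadditive.zsmul_comp, show n + 1 - (i + 1) = (n - (i + 1)) + 1 from by omega,
              X.sigma_kappa n (n - (i + 1)) (by omega), pow_succ]
            module
          · simp only [pow_zero, one_smul, Nat.sub_zero]
            rw [X.sigma_top_kappa n, Preadditive.comp_sub]
        have R : X.κ n ≫ (∑ i ∈ Finset.range (m + 2), ((-1 : ℤ) ^ i) • X.σ n (n + 1 - i))
            = (∑ i ∈ Finset.range m, ((-1 : ℤ) ^ i) • (X.κ n ≫ X.σ n (n - (i + 1))))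
              + (X.κ n ≫ X.σ n (n + 1) - X.κ n ≫ X.σ n n) := by
          conv_lhs => rw [Preadditive.comp_sum]
          conv_lhs => rw [Finset.sum_range_succ'
            (fun i => X.κ n ≫ (((-1 : ℤ) ^ i) • X.σ n (n + 1 - i))) (m + 1)]
          conv_lhs => rw [Finset.sum_range_succ'
            (fun i => X.κ n ≫ (((-1 : ℤ) ^ (i + 1)) • X.σ n (n + 1 - (i + 1)))) m]
          have e2 : ∀ i ∈ Finset.range m,
              X.κ n ≫ (((-1 : ℤ) ^ (i + 1 + 1)) • X.σ n (n + 1 - (i + 1 + 1)))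
              = ((-1 : ℤ) ^ i) • (X.κ n ≫ X.σ n (n - (i + 1))) := by
            intro i hi
            have hii : i < m := Finset.mem_range.mp hi
            rw [Preadditive.comp_zsmul, show n + 1 - (i + 1 + 1) = n - (i + 1) from by omega,
              pow_succ, pow_succ]
            module
          rw [Finset.sum_congr rfl e2]
          simp only [zero_add, pow_one, pow_zero, one_smul, neg_smul, Nat.sub_zero,
            Nat.add_sub_cancel, Preadditive.comp_neg]
          abel
        exact L.trans R.symm
      have hm : m ≤ n := by omega
      conv_lhs => rw [cpow_succ', ← Category.assoc, ih hm, Category.assoc, key,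
        ← Category.assoc]
      conv_rhs => rw [cpow_succ']

end DupMod
end Aux3
section Aux4
open Finset
set_option linter.unusedSectionVars false
namespace DupMod

variable {C : Type u} [Category.{v} C] [Preadditive C] (X : DupMod C)

lemma S_eq (n : ℕ) : ∑ i ∈ Finset.range (n + 1), ((-1 : ℤ) ^ i) • X.σ n (n + 1 - i)
    = ((-1 : ℤ) ^ (n + 1)) • (X.d n - X.σ n 0) := by
  have h1 : X.d n - X.σ n 0
      = ∑ i ∈ Finset.range (n + 1), ((-1 : ℤ) ^ (i + 1)) • X.σ n (i + 1) := by
    rw [d]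
    conv_lhs => rw [Finset.sum_range_succ' (fun i => ((-1 : ℤ) ^ i) • X.σ n i) (n + 1)]
    simp
  rw [h1, Finset.smul_sum]
  rw [← Finset.sum_range_reflect]
  refine Finset.sum_congr rfl fun j hj => ?_
  have hjn : j < n + 1 := Finset.mem_range.mp hj
  rw [show n + 1 - 1 - j = n - j from by omega, show n + 1 - (n - j) = j + 1 from by omega,
    smul_smul]
  congr 1
  rw [← pow_add, show n + 1 + (j + 1) = (n - j) + 2 * (j + 1) from by omega, pow_add, pow_mul]
  norm_num

lemma d_delta_top (m : ℕ) :
    X.d (m + 1) ≫ X.δ (m + 1) (m + 2)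
      = X.δ m (m + 1) ≫ ∑ i ∈ Finset.range (m + 1), ((-1 : ℤ) ^ i) • X.σ m i := by
  rw [d, Preadditive.sum_comp]
  conv_lhs => rw [Finset.sum_range_succ (fun i => (((-1 : ℤ) ^ i) • X.σ (m + 1) i) ≫ X.δ (m + 1) (m + 2)) (m + 2)]
  conv_lhs => rw [Finset.sum_range_succ (fun i => (((-1 : ℤ) ^ i) • X.σ (m + 1) i) ≫ X.δ (m + 1) (m + 2)) (m + 1)]
  have e1 : (((-1 : ℤ) ^ (m + 1)) • X.σ (m + 1) (m + 1)) ≫ X.δ (m + 1) (m + 2)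
      = ((-1 : ℤ) ^ (m + 1)) • 𝟙 (X.M (m + 1)) := by
    rw [Preadditive.zsmul_comp, X.δσ_succ (m + 1) (m + 1) le_rfl]
  have e2 : (((-1 : ℤ) ^ (m + 2)) • X.σ (m + 1) (m + 2)) ≫ X.δ (m + 1) (m + 2)
      = -(((-1 : ℤ) ^ (m + 1)) • 𝟙 (X.M (m + 1))) := by
    rw [Preadditive.zsmul_comp, X.δσ_self (m + 1) (m + 2) le_rfl, pow_succ]
    module
  rw [e1, e2]
  have e3 : ∀ i ∈ Finset.range (m + 1),
      (((-1 : ℤ) ^ i) • X.σ (m + 1) i) ≫ X.δ (m + 1) (m + 2)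
      = ((-1 : ℤ) ^ i) • (X.δ m (m + 1) ≫ X.σ m i) := by
    intro i hi
    have hii : i < m + 1 := Finset.mem_range.mp hi
    rw [Preadditive.zsmul_comp, X.δσ_gt m (m + 1) i (by omega) (by omega)]
  rw [Finset.sum_congr rfl e3, Preadditive.comp_sum]
  simp only [Preadditive.comp_zsmul]
  abel

end DupMod
end Aux4
section Aux5
open Finset
set_option linter.unusedSectionVars false
namespace DupMod

variable {C : Type u} [Category.{v} C] [Preadditive C] (X : DupMod C)

/-- Partial alternating sum of faces `∑_{j=m}^{n+1} (-1)^j ∂_j`. -/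
def Esum (n m : ℕ) : X.M (n + 1) ⟶ X.M n :=
  ∑ j ∈ Finset.Ico m (n + 2), ((-1 : ℤ) ^ j) • X.δ n j

lemma kappa_Esum (n m : ℕ) (hm : 1 ≤ m) (hm2 : m ≤ n + 1) :
    X.κ (n + 1) ≫ X.Esum n m = X.Esum n (m + 1) ≫ X.κ n := by
  rw [Esum, Esum, Preadditive.comp_sum, Preadditive.sum_comp]
  conv_lhs => rw [show n + 2 = (n + 1) + 1 from rfl, Finset.sum_Ico_succ_top hm2]
  have etop : X.κ (n + 1) ≫ (((-1 : ℤ) ^ (n + 1)) • X.δ n (n + 1)) = 0 := by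
    rw [Preadditive.comp_zsmul, X.kappa_delta_top n, smul_zero]
  rw [etop, add_zero]
  conv_lhs => rw [Finset.sum_Ico_eq_sum_range]
  conv_rhs => rw [Finset.sum_Ico_eq_sum_range,
    show n + 2 - (m + 1) = n + 1 - m from by omega]
  refine Finset.sum_congr rfl fun i hi => ?_
  have hii : i < n + 1 - m := Finset.mem_range.mp hi
  rw [Preadditive.comp_zsmul, X.kappa_delta n (m + i) (by omega) (by omega),
    Preadditive.zsmul_comp, show m + 1 + i = m + i + 1 from by omega, pow_succ]
  module

lemma cpow_kappa_Esum (n k : ℕ) (hk : k ≤ n) :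
    cpow (X.κ (n + 1)) k ≫ X.Esum n 1 = X.Esum n (k + 1) ≫ cpow (X.κ n) k := by
  induction k with
  | zero => simp [cpow]
  | succ k ih =>
      rw [show cpow (X.κ (n + 1)) (k + 1) = X.κ (n + 1) ≫ cpow (X.κ (n + 1)) k from rfl,
        Category.assoc, ih (by omega), ← Category.assoc,
        X.kappa_Esum n (k + 1) (by omega) (by omega), Category.assoc,
        show X.κ n ≫ cpow (X.κ n) k = cpow (X.κ n) (k + 1) from rfl]

lemma d_cpow (n : ℕ) : X.d n ≫ cpow (X.κ (n + 1)) n = cpow (X.κ n) n ≫ X.d n := by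
  cases n with
  | zero => simp [cpow]
  | succ N =>
      rw [d, Preadditive.sum_comp]
      conv_lhs => rw [Finset.sum_range_succ
        (fun i => (((-1 : ℤ) ^ i) • X.σ (N + 1) i) ≫ cpow (X.κ (N + 1 + 1)) (N + 1)) (N + 2)]
      conv_lhs => rw [Finset.sum_range_succ
        (fun i => (((-1 : ℤ) ^ i) • X.σ (N + 1) i) ≫ cpow (X.κ (N + 1 + 1)) (N + 1)) (N + 1)]
      have z : ∀ i ∈ Finset.range (N + 1),
          (((-1 : ℤ) ^ i) • X.σ (N + 1) i) ≫ cpow (X.κ (N + 1 + 1)) (N + 1) = 0 := by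
        intro i hi
        have hii : i < N + 1 := Finset.mem_range.mp hi
        rw [Preadditive.zsmul_comp, X.sigma_cpow_zero (N + 1) i (N + 1) (by omega) (by omega),
          smul_zero]
      rw [Finset.sum_congr rfl z, Finset.sum_const_zero, zero_add]
      have hA : X.σ (N + 1) (N + 1) ≫ cpow (X.κ (N + 1 + 1)) (N + 1)
          = ((-1 : ℤ) ^ (N + 1)) • (cpow (X.κ (N + 1)) (N + 1) ≫ X.σ (N + 1) 0) := by
        simpa using X.sigma_cpow (N + 1) (N + 1) 0 (by omega)
      have hB : X.σ (N + 1) (N + 2) ≫ cpow (X.κ (N + 1 + 1)) (N + 1)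
          = cpow (X.κ (N + 1)) (N + 1) ≫ (((-1 : ℤ) ^ (N + 2)) • (X.d (N + 1) - X.σ (N + 1) 0)) := by
        rw [X.sigma_top_cpow (N + 1) (N + 1) le_rfl, X.S_eq (N + 1)]
      rw [Preadditive.zsmul_comp, Preadditive.zsmul_comp, hA, hB]
      have s1 : ((-1 : ℤ) ^ (N + 1)) * ((-1 : ℤ) ^ (N + 1)) = 1 := by
        rw [← pow_add]; exact Even.neg_one_pow ⟨N + 1, by ring⟩
      have s2 : ((-1 : ℤ) ^ (N + 2)) * ((-1 : ℤ) ^ (N + 2)) = 1 := by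
        rw [← pow_add]; exact Even.neg_one_pow ⟨N + 2, by ring⟩
      rw [smul_smul, s1, one_smul, Preadditive.comp_zsmul, smul_smul, s2, one_smul,
        Preadditive.comp_sub]
      abel

end DupMod
end Aux5
/-- For a duplicial module `M`, the Dwyer–Kan operator
`π_n = (-1)^n ∂_{n+1,0} κ_{n+1}^n s_{n,n+1}` satisfies `π_n = κ_n^n − b_{n+1} κ_{n+1}^n d_n`. -/
theorem dwyer_kan_formula {C : Type u} [Category.{v} C] [Preadditive C]
    (X : DupMod C) (n : ℕ) :
    X.π n = cpow (X.κ n) n - X.d n ≫ cpow (X.κ (n + 1)) n ≫ X.b n := by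
  cases n with
  | zero =>
      have e1 : X.σ 0 0 ≫ X.δ 0 0 = 𝟙 (X.M 0) := X.δσ_self 0 0 (by omega)
      have e2 : X.σ 0 0 ≫ X.δ 0 1 = 𝟙 (X.M 0) := X.δσ_succ 0 0 (by omega)
      have e3 : X.σ 0 1 ≫ X.δ 0 1 = 𝟙 (X.M 0) := X.δσ_self 0 1 (by omega)
      simp only [DupMod.π, DupMod.d, DupMod.b, cpow, pow_zero, one_smul, Category.id_comp,
        Category.comp_id, Finset.sum_range_succ, Finset.sum_range_zero, zero_add, pow_one,
        neg_smul]
      simp only [Preadditive.add_comp, Preadditive.comp_add, Preadditive.neg_comp,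
        Preadditive.comp_neg, neg_neg]
      rw [e1, e2, e3]
      abel
  | succ N =>
      have hπ : X.π (N + 1) = cpow (X.κ (N + 1)) (N + 1)
          - cpow (X.κ (N + 1)) (N + 1) ≫ (X.d (N + 1) ≫ X.δ (N + 1) 0) := by
        show ((-1 : ℤ) ^ (N + 1)) •
            (X.σ (N + 1) (N + 1 + 1) ≫ cpow (X.κ (N + 1 + 1)) (N + 1) ≫ X.δ (N + 1) 0) = _
        rw [← Category.assoc (X.σ (N + 1) (N + 1 + 1)),
          X.sigma_top_cpow (N + 1) (N + 1) le_rfl, X.S_eq (N + 1), Category.assoc,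
          Preadditive.zsmul_comp, Preadditive.comp_zsmul, Preadditive.sub_comp,
          X.δσ_self (N + 1) 0 (by omega), Preadditive.comp_sub, Category.comp_id,
          smul_smul]
        have s1 : ((-1 : ℤ) ^ (N + 1)) * ((-1 : ℤ) ^ (N + 1 + 1)) = -1 := by
          rw [← pow_add]; exact Odd.neg_one_pow ⟨N + 1, by ring⟩
        rw [s1, neg_smul, one_smul, neg_sub]
      have hd : X.d (N + 1) ≫ cpow (X.κ (N + 1 + 1)) (N + 1) ≫ X.b (N + 1)
          = cpow (X.κ (N + 1)) (N + 1) ≫ (X.d (N + 1) ≫ X.b (N + 1)) := by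
        rw [← Category.assoc, X.d_cpow (N + 1), Category.assoc]
      have hP : (∑ i ∈ Finset.range (N + 1), ((-1 : ℤ) ^ i) • X.σ N i)
          ≫ cpow (X.κ (N + 1)) (N + 1) = 0 := by
        rw [Preadditive.sum_comp]
        refine Finset.sum_eq_zero fun i hi => ?_
        have hii : i < N + 1 := Finset.mem_range.mp hi
        rw [Preadditive.zsmul_comp, X.sigma_cpow_zero N i (N + 1) (by omega) (by omega),
          smul_zero]
      have eE : X.Esum (N + 1) (N + 1 + 1) = ((-1 : ℤ) ^ (N + 2)) • X.δ (N + 1) (N + 2) := by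
        rw [DupMod.Esum, show N + 1 + 2 = (N + 2) + 1 from rfl, Finset.sum_Ico_eq_sum_range]
        simp
      have hzero : cpow (X.κ (N + 1)) (N + 1) ≫ (X.d (N + 1) ≫ X.Esum (N + 1) 1) = 0 := by
        rw [← Category.assoc, ← X.d_cpow (N + 1), Category.assoc,
          X.cpow_kappa_Esum (N + 1) (N + 1) le_rfl, eE, Preadditive.zsmul_comp,
          Preadditive.comp_zsmul, ← Category.assoc, X.d_delta_top N, Category.assoc, hP,
          Limits.comp_zero, smul_zero]
      have hb : X.b (N + 1) = X.δ (N + 1) 0 + X.Esum (N + 1) 1 := by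
        rw [DupMod.b, DupMod.Esum]
        conv_lhs => rw [Finset.sum_range_succ' (fun i => ((-1 : ℤ) ^ i) • X.δ (N + 1) i) (N + 2)]
        rw [Finset.sum_Ico_eq_sum_range, show N + 1 + 2 - 1 = N + 2 from by omega]
        simp only [pow_zero, one_smul]
        rw [add_comm (X.δ (N + 1) 0)]
        congr 1
        refine Finset.sum_congr rfl fun i hi => ?_
        rw [Nat.add_comm 1 i]
      rw [hπ, hd, hb, Preadditive.comp_add, Preadditive.comp_add, hzero, add_zero]
end
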